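/- Let ({A₁, A₂}, Q) be a projective reconstruction of point correspondences P by two finite cameras with distinct centers, with principal rays n₁, n₂. Then there exists H ∈ GL₄(ℝ) such that ({A₁H⁻¹, A₂H⁻¹}, {Hq_k}) is a chiral reconstruction of P if and only if the products (n₁ᵀq_k)(n₂ᵀq_k) have the same sign for all k = 1,…,n. -/

import Mathlib

open Matrix

noncomputable section

/-- Left 3x3 block `G` of a 3x4 camera matrix `A = [G | t]`. -/
def leftBlock (A : Matrix (Fin 3) (Fin 4) ℝ) : Matrix (Fin 3) (Fin 3) ℝ :=
  Matrix.of fun i j => A i j.castSucc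

/-- Last column `t` of a 3x4 camera matrix `A = [G | t]`. -/
def tCol (A : Matrix (Fin 3) (Fin 4) ℝ) : Fin 3 → ℝ := fun i => A i 3

/-- A camera is finite if its left 3x3 block is invertible. -/
def FiniteCam (A : Matrix (Fin 3) (Fin 4) ℝ) : Prop := (leftBlock A).det ≠ 0

/-- The center `(-G⁻¹ t, 1)` of a finite camera. -/
def camCenter (A : Matrix (Fin 3) (Fin 4) ℝ) : Fin 4 → ℝ :=
  Fin.snoc (-((leftBlock A)⁻¹ *ᵥ tCol A)) 1

/-- The principal ray `det G • (third row of A)`. -/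
def principalRay (A : Matrix (Fin 3) (Fin 4) ℝ) : Fin 4 → ℝ :=
  (leftBlock A).det • A 2

/-- `n_∞ = (0,0,0,1)`. -/
def nInf : Fin 4 → ℝ := Fin.snoc (0 : Fin 3 → ℝ) 1

/-- The chiral domain `D_𝒜`: the closure, within `ℝ⁴ ∖ {0}` (i.e. ambient closure
intersected with `ℝ⁴ ∖ {0}`), of the set of finite vectors (last coordinate nonzero)
having positive depth in every camera of the arrangement. -/
def chiralDomain {m : ℕ} (A : Fin m → Matrix (Fin 3) (Fin 4) ℝ) : Set (Fin 4 → ℝ) :=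
  closure {q : Fin 4 → ℝ | nInf ⬝ᵥ q ≠ 0 ∧ ∀ i, 0 < (principalRay (A i) ⬝ᵥ q) * (nInf ⬝ᵥ q)}
    ∩ {q : Fin 4 → ℝ | q ≠ 0}

/-- `(𝒜, Q)` is a projective reconstruction of the point correspondences `p`. -/
def IsProjRecon {m n : ℕ} (A : Fin m → Matrix (Fin 3) (Fin 4) ℝ)
    (q : Fin n → Fin 4 → ℝ) (p : Fin m → Fin n → Fin 2 → ℝ) : Prop :=
  (∀ i, FiniteCam (A i)) ∧ (∀ k, q k ≠ 0) ∧
    ∀ i k, ∃ w : ℝ, w ≠ 0 ∧ A i *ᵥ q k = w • (Fin.snoc (p i k) 1 : Fin 3 → ℝ)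

/-- A chiral reconstruction: a projective reconstruction all of whose world points lie
in the chiral domain of the camera arrangement. -/
def IsChiralRecon {m n : ℕ} (A : Fin m → Matrix (Fin 3) (Fin 4) ℝ)
    (q : Fin n → Fin 4 → ℝ) (p : Fin m → Fin n → Fin 2 → ℝ) : Prop :=
  IsProjRecon A q p ∧ ∀ k, q k ∈ chiralDomain A

/-- The cone of all nonnegative combinations of a finite family of vectors in `ℝ⁴`. -/
def coneHull {k : ℕ} (v : Fin k → Fin 4 → ℝ) : Set (Fin 4 → ℝ) :=
  {x | ∃ c : Fin k → ℝ, (∀ l, 0 ≤ c l) ∧ x = ∑ l, c l • v l}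

/-- The dual cone `K* = {y : yᵀx ≥ 0 for all x ∈ K}`. -/
def dualConeSet (S : Set (Fin 4 → ℝ)) : Set (Fin 4 → ℝ) :=
  {y | ∀ x ∈ S, 0 ≤ y ⬝ᵥ x}

/-!
A homography `H` with last row `h` turns the depth `n_iᵀq` into `(hᵀc_i / det H) · n_iᵀq` and the
last coordinate of `Hq` into `hᵀq`, because `det G_{A H⁻¹} · det H = det [A; h] = det G_A · hᵀc_A`.
If the new reconstruction is chiral, the two new depths of each point have the same sign (a closed
condition), so `(n₀ᵀq_k)(n₁ᵀq_k)` has the sign of `(hᵀc₀)(hᵀc₁)` for every `k`. Conversely,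
perturb the third row of `A₀` (which vanishes at `c₀`) to an `h` with `(hᵀc₀)(hᵀc₁)` of the common
sign, keeping the sign of each `hᵀq_k`; then `H = [A₀; h]` puts every point strictly inside the
chiral domain. For the negative sign a perturbation direction `u` with `(uᵀc₀)(uᵀc₁) < 0` exists
because the distinct centers both have last coordinate `1`.
-/

open Filter Topology

def stack (A : Matrix (Fin 3) (Fin 4) ℝ) (h : Fin 4 → ℝ) : Matrix (Fin 4) (Fin 4) ℝ :=
  Matrix.of ![A 0, A 1, A 2, h]

section Stack

variable (A : Matrix (Fin 3) (Fin 4) ℝ) (h : Fin 4 → ℝ)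

lemma stack_three : stack A h 3 = h := rfl

lemma updateRow_stack (g : Fin 4 → ℝ) : (stack A h).updateRow 3 g = stack A g := by
  ext i j
  fin_cases i <;> simp [stack]

lemma stack_mul (H : Matrix (Fin 4) (Fin 4) ℝ) : stack A h * H = stack (A * H) (h ᵥ* H) := by
  ext i j
  fin_cases i <;> simp [stack, Matrix.mul_apply, vecMul, dotProduct]

lemma nInf_eq : nInf = ![0, 0, 0, 1] := by
  ext i
  fin_cases i <;> rfl

lemma nInf_dotProduct (x : Fin 4 → ℝ) : nInf ⬝ᵥ x = x 3 := by
  simp [nInf_eq, dotProduct, Fin.sum_univ_four]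

lemma nInf_vecMul (H : Matrix (Fin 4) (Fin 4) ℝ) : nInf ᵥ* H = H 3 := by
  ext j
  simp [nInf_eq, vecMul, dotProduct, Fin.sum_univ_four]

lemma det_stack_nInf : (stack A nInf).det = (leftBlock A).det := by
  simp [stack, nInf_eq, det_succ_row _ 3, Fin.sum_univ_succ, leftBlock, Fin.succAbove]
  ring

lemma nInf_dotProduct_camCenter : nInf ⬝ᵥ camCenter A = 1 := by
  rw [nInf_dotProduct]
  exact Fin.snoc_last (α := fun _ => ℝ) _ _

lemma mulVec_snoc (v : Fin 3 → ℝ) (x : ℝ) :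
    A *ᵥ Fin.snoc v x = leftBlock A *ᵥ v + x • tCol A := by
  have hlast : (Fin.snoc v x : Fin 4 → ℝ) 3 = x := Fin.snoc_last (α := fun _ => ℝ) _ _
  ext i
  simp [mulVec, dotProduct, Fin.sum_univ_castSucc, leftBlock, tCol, hlast, mul_comm]

lemma camCenter_ne_zero : camCenter A ≠ 0 := fun hc => by
  simpa [hc] using nInf_dotProduct_camCenter A

variable {A}

lemma mulVec_camCenter (hA : FiniteCam A) : A *ᵥ camCenter A = 0 := by
  rw [camCenter, mulVec_snoc, mulVec_neg, mulVec_mulVec,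
    mul_nonsing_inv _ (isUnit_iff_ne_zero.2 hA), one_mulVec, one_smul, neg_add_cancel]

/-- Writing `h = g + (h ⬝ᵥ c) • nInf` with `g ⬝ᵥ c = 0`, the matrix `[A; g]` kills the center `c`. -/
lemma det_stack (hA : FiniteCam A) : (stack A h).det = (leftBlock A).det * (h ⬝ᵥ camCenter A) := by
  set c := camCenter A
  set g := h - (h ⬝ᵥ c) • nInf
  have hgc : g ⬝ᵥ c = 0 := by
    simp [g, sub_dotProduct, nInf_dotProduct_camCenter, c]
  have hg : (stack A g).det = 0 := by
    refine exists_mulVec_eq_zero_iff.1 ⟨c, camCenter_ne_zero A, ?_⟩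
    have hAc := mulVec_camCenter hA
    ext i
    fin_cases i
    · exact congrFun hAc 0
    · exact congrFun hAc 1
    · exact congrFun hAc 2
    · exact hgc
  calc (stack A h).det = ((stack A g).updateRow 3 (g + (h ⬝ᵥ c) • nInf)).det := by
        simp [updateRow_stack, g]
    _ = (leftBlock A).det * (h ⬝ᵥ c) := by
        rw [det_updateRow_add, det_updateRow_smul, updateRow_stack, updateRow_stack, hg,
          det_stack_nInf, zero_add, mul_comm]

end Stack

section Homography

variable {A : Matrix (Fin 3) (Fin 4) ℝ} {H : Matrix (Fin 4) (Fin 4) ℝ}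

lemma det_leftBlock_mul_inv (hA : FiniteCam A) (hH : IsUnit H.det) :
    (leftBlock (A * H⁻¹)).det * H.det = (leftBlock A).det * (H 3 ⬝ᵥ camCenter A) := by
  have hstack : stack (A * H⁻¹) nInf * H = stack A (H 3) := by
    rw [stack_mul, nInf_vecMul, Matrix.mul_assoc, nonsing_inv_mul H hH, Matrix.mul_one]
  rw [← det_stack_nInf, ← det_mul, hstack, det_stack _ hA]

lemma finiteCam_mul_inv_iff (hA : FiniteCam A) (hH : IsUnit H.det) :
    FiniteCam (A * H⁻¹) ↔ H 3 ⬝ᵥ camCenter A ≠ 0 := by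
  rw [FiniteCam, ← mul_ne_zero_iff_right hH.ne_zero, det_leftBlock_mul_inv hA hH,
    mul_ne_zero_iff_left hA]

lemma principalRay_dotProduct (A : Matrix (Fin 3) (Fin 4) ℝ) (x : Fin 4 → ℝ) :
    principalRay A ⬝ᵥ x = (leftBlock A).det * (A *ᵥ x) 2 := by
  rw [principalRay, smul_dotProduct, smul_eq_mul]
  rfl

lemma principalRay_mul_inv_dotProduct_mulVec (hA : FiniteCam A) (hH : IsUnit H.det)
    (x : Fin 4 → ℝ) :
    (principalRay (A * H⁻¹) ⬝ᵥ (H *ᵥ x)) * H.det = (H 3 ⬝ᵥ camCenter A) * (principalRay A ⬝ᵥ x) := by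
  have hx : (A * H⁻¹) *ᵥ (H *ᵥ x) = A *ᵥ x := by
    rw [mulVec_mulVec, Matrix.mul_assoc, nonsing_inv_mul H hH, Matrix.mul_one]
  rw [principalRay_dotProduct, principalRay_dotProduct, hx, mul_right_comm,
    det_leftBlock_mul_inv hA hH]
  ring

lemma nInf_dotProduct_mulVec (x : Fin 4 → ℝ) : nInf ⬝ᵥ (H *ᵥ x) = H 3 ⬝ᵥ x := by
  rw [dotProduct_mulVec, nInf_vecMul]

end Homography

section Reconstruction

variable {m n : ℕ} {A : Fin m → Matrix (Fin 3) (Fin 4) ℝ} {q : Fin n → Fin 4 → ℝ}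
  {p : Fin m → Fin n → Fin 2 → ℝ}

lemma IsProjRecon.principalRay_dotProduct_ne_zero (hrec : IsProjRecon A q p) (i : Fin m)
    (k : Fin n) : principalRay (A i) ⬝ᵥ q k ≠ 0 := by
  obtain ⟨w, hw, hwq⟩ := hrec.2.2 i k
  have hlast : (Fin.snoc (p i k) 1 : Fin 3 → ℝ) 2 = 1 := Fin.snoc_last (α := fun _ => ℝ) _ _
  rw [principalRay_dotProduct, hwq, Pi.smul_apply, hlast, smul_eq_mul, mul_one]
  exact mul_ne_zero (hrec.1 i) hw

lemma IsProjRecon.mul_inv (hrec : IsProjRecon A q p) {H : Matrix (Fin 4) (Fin 4) ℝ}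
    (hH : IsUnit H.det) (hfin : ∀ i, FiniteCam (A i * H⁻¹)) :
    IsProjRecon (fun i => A i * H⁻¹) (fun k => H *ᵥ q k) p := by
  refine ⟨hfin, fun k => ?_, fun i k => ?_⟩
  · have hinj := mulVec_injective_iff_isUnit.2 ((isUnit_iff_isUnit_det H).2 hH)
    exact fun h0 => hrec.2.1 k (hinj (h0.trans (mulVec_zero H).symm))
  · simpa only [mulVec_mulVec, Matrix.mul_assoc, nonsing_inv_mul H hH, Matrix.mul_one]
      using hrec.2.2 i k

lemma mem_chiralDomain_of_forall_pos {x : Fin 4 → ℝ} (hx : nInf ⬝ᵥ x ≠ 0)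
    (hpos : ∀ i, 0 < (principalRay (A i) ⬝ᵥ x) * (nInf ⬝ᵥ x)) : x ∈ chiralDomain A :=
  ⟨subset_closure ⟨hx, hpos⟩, fun h0 => hx (by rw [h0, dotProduct_zero])⟩

lemma principalRay_dotProduct_mul_nonneg_of_mem_chiralDomain {x : Fin 4 → ℝ}
    (hx : x ∈ chiralDomain A) (i j : Fin m) :
    0 ≤ (principalRay (A i) ⬝ᵥ x) * (principalRay (A j) ⬝ᵥ x) := by
  have hcont : Continuous fun y : Fin 4 → ℝ =>
      (principalRay (A i) ⬝ᵥ y) * (principalRay (A j) ⬝ᵥ y) := by fun_prop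
  refine closure_minimal (fun y hy => ?_) (isClosed_le continuous_const hcont) hx.1
  obtain ⟨-, hy⟩ := hy
  have hprod : 0 < ((principalRay (A i) ⬝ᵥ y) * (principalRay (A j) ⬝ᵥ y)) * (nInf ⬝ᵥ y) ^ 2 :=
    (mul_pos (hy i) (hy j)).trans_eq (by ring)
  exact (pos_of_mul_pos_left hprod (sq_nonneg _)).le

end Reconstruction

lemma exists_pos_mul_add_mul_sq {P : ℝ → Prop} (hP : ∀ᶠ δ in 𝓝 0, P δ) (b : ℝ) {c : ℝ}
    (hc : 0 < c) : ∃ δ, P δ ∧ 0 < b * δ + c * δ ^ 2 := by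
  rcases le_or_gt 0 b with hb | hb
  · obtain ⟨δ, hPδ, hδ : 0 < δ⟩ := ((hP.filter_mono nhdsWithin_le_nhds).and
      (self_mem_nhdsWithin (s := Set.Ioi 0))).exists
    exact ⟨δ, hPδ, add_pos_of_nonneg_of_pos (mul_nonneg hb hδ.le) (by positivity)⟩
  · obtain ⟨δ, hPδ, hδ : δ < 0⟩ := ((hP.filter_mono nhdsWithin_le_nhds).and
      (self_mem_nhdsWithin (s := Set.Iio 0))).exists
    exact ⟨δ, hPδ, add_pos_of_pos_of_nonneg (mul_pos_of_neg_of_neg hb hδ) (by positivity)⟩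

/-- Take `h = a + δ • u` with `δ` small: since `a ⬝ᵥ c₀ = 0`, `s * ((h ⬝ᵥ c₀) * (h ⬝ᵥ c₁))` is a
quadratic in `δ` with no constant term and positive leading coefficient. -/
lemma exists_dotProduct_sign {ι κ : Type*} [Fintype ι] [Finite κ] (q : κ → ι → ℝ)
    {a u c₀ c₁ : ι → ℝ} {s : ℝ} (hq : ∀ k, a ⬝ᵥ q k ≠ 0) (hc₀ : a ⬝ᵥ c₀ = 0)
    (hu : 0 < s * ((u ⬝ᵥ c₀) * (u ⬝ᵥ c₁))) :
    ∃ h : ι → ℝ, (∀ k, 0 < (a ⬝ᵥ q k) * (h ⬝ᵥ q k)) ∧ 0 < s * ((h ⬝ᵥ c₀) * (h ⬝ᵥ c₁)) := by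
  have hdot (δ : ℝ) (x : ι → ℝ) : (a + δ • u) ⬝ᵥ x = a ⬝ᵥ x + δ * (u ⬝ᵥ x) := by
    rw [add_dotProduct, smul_dotProduct, smul_eq_mul]
  have hnear : ∀ᶠ δ in 𝓝 (0 : ℝ), ∀ k, 0 < (a ⬝ᵥ q k) * ((a + δ • u) ⬝ᵥ q k) := by
    refine eventually_all.2 fun k => ?_
    simp only [hdot]
    have hcont : Continuous fun δ : ℝ => (a ⬝ᵥ q k) * (a ⬝ᵥ q k + δ * (u ⬝ᵥ q k)) := by fun_prop
    exact (hcont.tendsto 0).eventually_const_lt (by simpa using mul_self_pos.2 (hq k))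
  obtain ⟨δ, hδq, hδc⟩ := exists_pos_mul_add_mul_sq hnear (s * (u ⬝ᵥ c₀) * (a ⬝ᵥ c₁)) hu
  refine ⟨a + δ • u, hδq, ?_⟩
  convert hδc using 1
  rw [hdot, hdot, hc₀]
  ring

lemma exists_dotProduct_mul_dotProduct_neg {ι : Type*} [Fintype ι] {x y e : ι → ℝ} (hxy : x ≠ y)
    (hx : e ⬝ᵥ x = 1) (hy : e ⬝ᵥ y = 1) : ∃ u : ι → ℝ, (u ⬝ᵥ x) * (u ⬝ᵥ y) < 0 := by
  set d := y - x
  have hd : 0 < d ⬝ᵥ d := lt_of_le_of_ne (Finset.sum_nonneg fun i _ => mul_self_nonneg (d i))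
    (Ne.symm (dotProduct_self_eq_zero.not.2 (sub_ne_zero.2 hxy.symm)))
  -- `u ⬝ᵥ x = -(d ⬝ᵥ d) / 2` and `u ⬝ᵥ y = (d ⬝ᵥ d) / 2`
  refine ⟨d - ((d ⬝ᵥ x + d ⬝ᵥ y) / 2) • e, ?_⟩
  have hdd : d ⬝ᵥ d = d ⬝ᵥ y - d ⬝ᵥ x := by simp [d, dotProduct_sub]
  simp only [sub_dotProduct, smul_dotProduct, hx, hy, smul_eq_mul, mul_one]
  nlinarith

section TwoView

variable {n : ℕ} {A : Fin 2 → Matrix (Fin 3) (Fin 4) ℝ} {q : Fin n → Fin 4 → ℝ}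
  {p : Fin 2 → Fin n → Fin 2 → ℝ}

lemma IsChiralRecon.pos_mul_principalRay_dotProduct (hrec : IsProjRecon A q p)
    {H : Matrix (Fin 4) (Fin 4) ℝ} (hH : IsUnit H.det)
    (hchir : IsChiralRecon (fun i => A i * H⁻¹) (fun k => H *ᵥ q k) p) (k : Fin n) :
    0 < ((H 3 ⬝ᵥ camCenter (A 0)) * (H 3 ⬝ᵥ camCenter (A 1))) *
      ((principalRay (A 0) ⬝ᵥ q k) * (principalRay (A 1) ⬝ᵥ q k)) := by
  have hc (i : Fin 2) : H 3 ⬝ᵥ camCenter (A i) ≠ 0 :=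
    (finiteCam_mul_inv_iff (hrec.1 i) hH).1 (hchir.1.1 i)
  have hN (i : Fin 2) := principalRay_mul_inv_dotProduct_mulVec (hrec.1 i) hH (q k)
  have hne := hrec.principalRay_dotProduct_ne_zero
  refine lt_of_le_of_ne ?_
    (mul_ne_zero (mul_ne_zero (hc 0) (hc 1)) (mul_ne_zero (hne 0 k) (hne 1 k))).symm
  calc 0 ≤ ((principalRay (A 0 * H⁻¹) ⬝ᵥ (H *ᵥ q k)) * (principalRay (A 1 * H⁻¹) ⬝ᵥ (H *ᵥ q k)))
        * H.det ^ 2 :=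
      mul_nonneg (principalRay_dotProduct_mul_nonneg_of_mem_chiralDomain (hchir.2 k) 0 1)
        (sq_nonneg _)
    _ = _ := by
      linear_combination (principalRay (A 1 * H⁻¹) ⬝ᵥ (H *ᵥ q k) * H.det) * hN 0 +
        (H 3 ⬝ᵥ camCenter (A 0)) * (principalRay (A 0) ⬝ᵥ q k) * hN 1

/-- The homography is `H = [A₀; h]` (sending `A₀` to `[I | 0]`), where `h ⬝ᵥ q k` has the sign
of `(A₀ *ᵥ q k) 2` and `(h ⬝ᵥ c₀) * (h ⬝ᵥ c₁)` has the sign of `s`. -/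
lemma exists_isChiralRecon_of_sign (hrec : IsProjRecon A q p) (s : ℝ)
    (hs : ∀ k, 0 < s * ((principalRay (A 0) ⬝ᵥ q k) * (principalRay (A 1) ⬝ᵥ q k)))
    (hu : ∃ u : Fin 4 → ℝ, 0 < s * ((u ⬝ᵥ camCenter (A 0)) * (u ⬝ᵥ camCenter (A 1)))) :
    ∃ H : Matrix (Fin 4) (Fin 4) ℝ, IsUnit H.det ∧
      IsChiralRecon (fun i => A i * H⁻¹) (fun k => H *ᵥ q k) p := by
  obtain ⟨u, hu⟩ := hu
  have he (i : Fin 2) : (leftBlock (A i)).det ≠ 0 := hrec.1 i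
  have hr0 (k : Fin n) : A 0 2 ⬝ᵥ q k ≠ 0 := by
    have := hrec.principalRay_dotProduct_ne_zero 0 k
    rw [principalRay_dotProduct] at this
    exact right_ne_zero_of_mul this
  obtain ⟨h, hhq, hhc⟩ := exists_dotProduct_sign q hr0
    (congrFun (mulVec_camCenter (hrec.1 0)) 2) hu
  have hc (i : Fin 2) : h ⬝ᵥ camCenter (A i) ≠ 0 := by
    fin_cases i
    · exact left_ne_zero_of_mul (right_ne_zero_of_mul hhc.ne')
    · exact right_ne_zero_of_mul (right_ne_zero_of_mul hhc.ne')
  set H := stack (A 0) h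
  have hH3 : H 3 = h := stack_three _ _
  have hdet : H.det = (leftBlock (A 0)).det * (h ⬝ᵥ camCenter (A 0)) := det_stack h (hrec.1 0)
  have hH : IsUnit H.det := isUnit_iff_ne_zero.2 (hdet ▸ mul_ne_zero (he 0) (hc 0))
  have hfin (i : Fin 2) : FiniteCam (A i * H⁻¹) :=
    (finiteCam_mul_inv_iff (hrec.1 i) hH).2 (hc i)
  have hn0 (k : Fin n) : principalRay (A 0) ⬝ᵥ q k = (leftBlock (A 0)).det * (A 0 2 ⬝ᵥ q k) :=
    principalRay_dotProduct _ _
  have hdepth (i : Fin 2) (k : Fin n) (hik : 0 < (h ⬝ᵥ camCenter (A i)) *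
      (principalRay (A i) ⬝ᵥ q k) * (h ⬝ᵥ q k) * ((leftBlock (A 0)).det * (h ⬝ᵥ camCenter (A 0)))) :
      0 < (principalRay (A i * H⁻¹) ⬝ᵥ (H *ᵥ q k)) * (nInf ⬝ᵥ (H *ᵥ q k)) := by
    have hN := principalRay_mul_inv_dotProduct_mulVec (hrec.1 i) hH (q k)
    rw [nInf_dotProduct_mulVec, hH3]
    rw [hH3] at hN
    refine pos_of_mul_pos_left (b := H.det ^ 2) ?_ (sq_nonneg _)
    calc 0 < _ := hik
      _ = _ := by rw [← hdet, ← hN]; ring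
  refine ⟨H, hH, hrec.mul_inv hH hfin, fun k => mem_chiralDomain_of_forall_pos ?_
    (Fin.forall_fin_two.2 ⟨hdepth 0 k ?_, hdepth 1 k ?_⟩)⟩
  · rw [nInf_dotProduct_mulVec, hH3]
    exact right_ne_zero_of_mul (hhq k).ne'
  · calc 0 < ((leftBlock (A 0)).det * (h ⬝ᵥ camCenter (A 0))) ^ 2 * ((A 0 2 ⬝ᵥ q k) * (h ⬝ᵥ q k)) :=
          mul_pos (pow_two_pos_of_ne_zero (mul_ne_zero (he 0) (hc 0))) (hhq k)
      _ = _ := by rw [hn0]; ring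
  · refine pos_of_mul_pos_right (a := (s * (A 0 2 ⬝ᵥ q k)) ^ 2) ?_ (sq_nonneg _)
    calc 0 < s * ((h ⬝ᵥ camCenter (A 0)) * (h ⬝ᵥ camCenter (A 1)))
          * (s * ((principalRay (A 0) ⬝ᵥ q k) * (principalRay (A 1) ⬝ᵥ q k)))
          * ((A 0 2 ⬝ᵥ q k) * (h ⬝ᵥ q k)) := mul_pos (mul_pos hhc (hs k)) (hhq k)
      _ = _ := by rw [hn0]; ring

end TwoView

/-- Hartley's two-view theorem: a two-view projective reconstruction with
distinct camera centers can be transformed by a homography to a chiral reconstruction iff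
the products `(n₁ᵀq_k)(n₂ᵀq_k)` have the same sign for all `k`. -/
theorem two_view_chiral_iff_same_sign {n : ℕ}
    (A : Fin 2 → Matrix (Fin 3) (Fin 4) ℝ)
    (q : Fin n → Fin 4 → ℝ) (p : Fin 2 → Fin n → Fin 2 → ℝ)
    (hrec : IsProjRecon A q p)
    (hdist : camCenter (A 0) ≠ camCenter (A 1)) :
    (∃ H : Matrix (Fin 4) (Fin 4) ℝ, IsUnit H.det ∧
        IsChiralRecon (fun i => A i * H⁻¹) (fun k => H *ᵥ q k) p) ↔
    ((∀ k, 0 < (principalRay (A 0) ⬝ᵥ q k) * (principalRay (A 1) ⬝ᵥ q k)) ∨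
     (∀ k, (principalRay (A 0) ⬝ᵥ q k) * (principalRay (A 1) ⬝ᵥ q k) < 0)) := by
  constructor
  · rintro ⟨H, hH, hchir⟩
    have hsign := hchir.pos_mul_principalRay_dotProduct hrec hH
    rcases le_or_gt ((H 3 ⬝ᵥ camCenter (A 0)) * (H 3 ⬝ᵥ camCenter (A 1))) 0 with hc | hc
    · exact Or.inr fun k => neg_of_mul_pos_right (hsign k) hc
    · exact Or.inl fun k => pos_of_mul_pos_right (hsign k) hc.le
  · rintro (hpos | hneg)
    · refine exists_isChiralRecon_of_sign hrec 1 (by simpa using hpos) ⟨nInf, ?_⟩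
      simp [nInf_dotProduct_camCenter]
    · obtain ⟨u, hu⟩ := exists_dotProduct_mul_dotProduct_neg hdist
        (nInf_dotProduct_camCenter _) (nInf_dotProduct_camCenter _)
      exact exists_isChiralRecon_of_sign hrec (-1) (fun k => by linarith [hneg k])
        ⟨u, by linarith⟩
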